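/- arXiv:math/9411207 — 5 statements merged into one kernel-verified Lean document; each statement's English description precedes it below -/
import Mathlib

section
/- For every natural number n there exists exactly one binary operation * on the set {0,1,…,2^n−1} (equivalently on Fin (2^n)) such that * is left self-distributive, i.e. a*(b*c) = (a*b)*(a*c) for all a,b,c, and a*1 = a+1 (mod 2^n) for all a. -/
/-!
Write `a * b` for the operation and represent `Fin N` by `1, …, N`. Taking `c = 1` in left
self-distributivity gives `a * (b + 1) = (a * b) * (a + 1)`, and then `0 * b = b`. For `a < N` one
has `a < a * b ≤ N`, so these rules determine the operation by descending induction on `a` and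
ascending induction on `b`: this is the Laver table. The same induction shows that for
`N ∣ M` reduction mod `N` maps the table of size `M` onto every such operation on `Fin N`.

The table is left self-distributive as soon as `a * N = N` for all `a`, and this property passes
from `N` to `2 * N`. Indeed, row `a` of the table of size `2 * N` is periodic, with period `p`, and
hits `2 * N` exactly at the multiples of `p`. Reducing mod `N`, it hits `{N, 2 * N}` exactly at the
multiples of the period `m ∣ N` of the image row. As the row is injective on `[1, p]`, this leaves
`p ∈ {m, 2 * m}`, so `p ∣ 2 * N`.
-/

open Function

namespace LaverTable

-- The guard `a < x` always holds (`laver_mem_Ioc`); it only makes the recursion well founded.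
def laver (N a b : ℕ) : ℕ :=
  if N ≤ a then b
  else (fun x => if a < x then laver N x (a + 1) else x)^[b - 1] (a + 1)
termination_by N - a

variable {N a b c : ℕ}

theorem laver_of_le (h : N ≤ a) (b : ℕ) : laver N a b = b := by
  rw [laver, if_pos h]

theorem laver_one (h : a < N) : laver N a 1 = a + 1 := by
  rw [laver, if_neg (not_le.2 h)]
  rfl

theorem laver_succ_eq_ite (h : a < N) (hb : 1 ≤ b) :
    laver N a (b + 1) =
      if a < laver N a b then laver N (laver N a b) (a + 1) else laver N a b := by
  obtain ⟨b, rfl⟩ : ∃ b', b = b' + 1 := ⟨b - 1, by omega⟩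
  rw [laver.eq_1 N a (b + 1 + 1), laver.eq_1 N a (b + 1), if_neg (not_le.2 h),
    if_neg (not_le.2 h), Nat.add_sub_cancel, Nat.add_sub_cancel, iterate_succ_apply']

theorem laver_mem_Ioc {N a b : ℕ} (ha : a < N) (hb : 1 ≤ b) : laver N a b ∈ Set.Ioc a N := by
  induction b, hb using Nat.le_induction with
  | base => rw [laver_one ha]; exact ⟨by omega, by omega⟩
  | succ b hb ih =>
    rw [laver_succ_eq_ite ha hb, if_pos ih.1]
    rcases ih.2.eq_or_lt with htop | hlt
    · rw [htop, laver_of_le le_rfl]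
      exact ⟨by omega, by omega⟩
    · have hnext := laver_mem_Ioc hlt (Nat.le_add_left 1 a)
      exact ⟨ih.1.trans hnext.1, hnext.2⟩
termination_by N - a
decreasing_by exact Nat.sub_lt_sub_left ha ih.1

theorem laver_succ (ha : a < N) (hb : 1 ≤ b) :
    laver N a (b + 1) = laver N (laver N a b) (a + 1) := by
  rw [laver_succ_eq_ite ha hb, if_pos (laver_mem_Ioc ha hb).1]

theorem laver_mem_Icc (hb : b ∈ Set.Icc 1 N) : laver N a b ∈ Set.Icc 1 N := by
  rcases le_or_gt N a with ha | ha
  · rwa [laver_of_le ha]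
  · exact ⟨by have := (laver_mem_Ioc ha hb.1).1; omega, (laver_mem_Ioc ha hb.1).2⟩

theorem laver_ldist {N a b c : ℕ} (hN : ∀ a, laver N a N = N) (hb : 1 ≤ b) (hbN : b ≤ N)
    (hc : 1 ≤ c) :
    laver N a (laver N b c) = laver N (laver N a b) (laver N a c) := by
  rcases le_or_gt N a with hA | hA
  · simp only [laver_of_le hA]
  rcases hbN.eq_or_lt with rfl | hB
  · rw [laver_of_le le_rfl, hN, laver_of_le le_rfl]
  obtain rfl | ⟨c, hc', rfl⟩ : c = 1 ∨ ∃ c', 1 ≤ c' ∧ c = c' + 1 :=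
    (eq_or_ne c 1).imp id fun h => ⟨c - 1, by omega, by omega⟩
  · rw [laver_one hB, laver_succ hA hb, laver_one hA]
  obtain ⟨hbc, hbcN⟩ := laver_mem_Ioc hB hc'
  obtain ⟨hac, hacN⟩ := laver_mem_Ioc hA hc'
  have hab := (laver_mem_Ioc hA hb).1
  calc laver N a (laver N b (c + 1))
      = laver N a (laver N (laver N b c) (b + 1)) := by rw [laver_succ hB hc']
    _ = laver N (laver N a (laver N b c)) (laver N a (b + 1)) :=
        laver_ldist hN (by omega) hbcN (by omega)
    _ = laver N (laver N (laver N a b) (laver N a c)) (laver N (laver N a b) (a + 1)) := by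
        rw [laver_ldist hN hb hbN hc', laver_succ hA hb]
    _ = laver N (laver N a b) (laver N (laver N a c) (a + 1)) :=
        (laver_ldist hN (by omega) hacN (by omega)).symm
    _ = laver N (laver N a b) (laver N a (c + 1)) := by rw [laver_succ hA hc']
termination_by (N - a, N - b, c)

theorem laver_succ_eq_iterate (ha : a < N) (b : ℕ) :
    laver N a (b + 1) = (laver N · (a + 1))^[b] (a + 1) := by
  induction b with
  | zero => exact laver_one ha
  | succ b ih => rw [iterate_succ_apply', ← ih, laver_succ ha (Nat.le_add_left 1 b)]

theorem laver_succ_eq_succ_iff (ha : a < N) (hb : 1 ≤ b) :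
    laver N a (b + 1) = a + 1 ↔ laver N a b = N := by
  obtain ⟨hab, habN⟩ := laver_mem_Ioc ha hb
  rw [laver_succ ha hb]
  refine ⟨fun h => ?_, fun h => by rw [h, laver_of_le le_rfl]⟩
  by_contra hne
  have := (laver_mem_Ioc (lt_of_le_of_ne habN hne) (Nat.le_add_left 1 a)).1
  omega

noncomputable def period (N a : ℕ) : ℕ := minimalPeriod (laver N · (a + 1)) (a + 1)

theorem laver_eq_top_iff (ha : a < N) (hb : 1 ≤ b) : laver N a b = N ↔ period N a ∣ b := by
  obtain ⟨b, rfl⟩ : ∃ b', b = b' + 1 := ⟨b - 1, by omega⟩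
  rw [← laver_succ_eq_succ_iff ha hb, laver_succ_eq_iterate ha, period,
    ← isPeriodicPt_iff_minimalPeriod_dvd]
  rfl

theorem exists_laver_eq_top (ha : a < N) : ∃ b, 1 ≤ b ∧ laver N a b = N := by
  by_contra! hne
  have hgrow : ∀ b, 1 ≤ b → a + b ≤ laver N a b := by
    intro b hb
    induction b, hb using Nat.le_induction with
    | base => rw [laver_one ha]
    | succ b hb ih =>
      obtain ⟨-, hle⟩ := laver_mem_Ioc ha hb
      have hlt := (laver_mem_Ioc (lt_of_le_of_ne hle (hne b hb)) (Nat.le_add_left 1 a)).1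
      rw [laver_succ ha hb]
      omega
  have := hgrow (N + 1) (Nat.le_add_left 1 N)
  have := (laver_mem_Ioc ha (Nat.le_add_left 1 N)).2
  omega

theorem period_pos (ha : a < N) : 0 < period N a := by
  obtain ⟨b, hb, htop⟩ := exists_laver_eq_top ha
  exact Nat.pos_of_dvd_of_pos ((laver_eq_top_iff ha hb).1 htop) hb

theorem laver_injOn (ha : a < N) : Set.InjOn (laver N a) (Set.Icc 1 (period N a)) := by
  rintro i ⟨hi, hip⟩ j ⟨hj, hjp⟩ h
  obtain ⟨i, rfl⟩ : ∃ i', i = i' + 1 := ⟨i - 1, by omega⟩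
  obtain ⟨j, rfl⟩ : ∃ j', j = j' + 1 := ⟨j - 1, by omega⟩
  rw [laver_succ_eq_iterate ha, laver_succ_eq_iterate ha] at h
  have := iterate_injOn_Iio_minimalPeriod (show i < period N a by omega)
    (show j < period N a by omega) h
  omega

theorem period_dvd_two_mul {m : ℕ} (ha : a < 2 * N)
    (hdvd : ∀ b, 1 ≤ b → (N ∣ laver (2 * N) a b ↔ m ∣ b)) : period (2 * N) a ∣ 2 * m := by
  have hp := period_pos ha
  obtain ⟨k, hk⟩ : m ∣ period (2 * N) a := by
    rw [← hdvd _ hp, (laver_eq_top_iff ha hp).2 dvd_rfl]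
    exact dvd_mul_left N 2
  have hm : 0 < m := Nat.pos_of_mul_pos_right (hk ▸ hp)
  have hval : ∀ j, 1 ≤ j → laver (2 * N) a (j * m) = N ∨ laver (2 * N) a (j * m) = 2 * N := by
    intro j hj
    have hjm : 1 ≤ j * m := Nat.one_le_iff_ne_zero.2 (by positivity)
    obtain ⟨i, hi⟩ := (hdvd _ hjm).2 (dvd_mul_left m j)
    obtain ⟨hlt, hle⟩ := laver_mem_Ioc ha hjm
    have : i ≤ 2 := by nlinarith
    interval_cases i <;> omega
  have hne : ∀ i j, 1 ≤ i → i < j → j ≤ k →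
      laver (2 * N) a (i * m) ≠ laver (2 * N) a (j * m) := by
    intro i j hi hij hjk h
    have := laver_injOn ha ⟨by nlinarith, by nlinarith⟩ ⟨by nlinarith, by nlinarith⟩ h
    exact hij.ne (Nat.eq_of_mul_eq_mul_right hm this)
  -- The row is injective on `[1, m * k]` and takes only the values `N` and `2 * N` at the
  -- multiples of `m`, so `k ≤ 2`.
  have hk2 : k ≤ 2 := by
    by_contra! hk3
    have := hne 1 2; have := hne 1 3; have := hne 2 3
    have := hval 1; have := hval 2; have := hval 3
    omega
  rw [hk]
  interval_cases k
  · omega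
  · simp
  · rw [mul_comm]

section Cyclic

open Fin.NatCast

variable [NeZero N]

def rep (x : Fin N) : ℕ := if x = 0 then N else x.val

theorem rep_mem_Icc (x : Fin N) : rep x ∈ Set.Icc 1 N := by
  unfold rep
  split_ifs with hx
  · exact ⟨NeZero.one_le, le_rfl⟩
  · exact ⟨Nat.one_le_iff_ne_zero.2 (Fin.val_ne_zero_iff.2 hx), x.isLt.le⟩

theorem cast_rep (x : Fin N) : (rep x : Fin N) = x := by
  unfold rep
  split_ifs with hx
  · rw [hx, Fin.natCast_self]
  · exact Fin.cast_val_eq_self x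

theorem natCast_eq_zero_iff_eq {v : ℕ} (hv : v ∈ Set.Icc 1 N) : (v : Fin N) = 0 ↔ v = N := by
  rw [Fin.natCast_eq_zero]
  exact ⟨fun h => le_antisymm hv.2 (Nat.le_of_dvd hv.1 h), fun h => h ▸ dvd_rfl⟩

theorem rep_natCast {v : ℕ} (hv : v ∈ Set.Icc 1 N) : rep (v : Fin N) = v := by
  unfold rep
  split_ifs with h
  · exact ((natCast_eq_zero_iff_eq hv).1 h).symm
  · have hlt : v < N := lt_of_le_of_ne hv.2 (mt (natCast_eq_zero_iff_eq hv).2 h)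
    rw [Fin.val_natCast, Nat.mod_eq_of_lt hlt]

theorem dvd_rep_natCast_iff {m : ℕ} (hm : m ∣ N) (b : ℕ) : m ∣ rep (b : Fin N) ↔ m ∣ b := by
  unfold rep
  split_ifs with h
  · exact iff_of_true hm (hm.trans (Fin.natCast_eq_zero.1 h))
  · rw [Fin.val_natCast, Nat.dvd_mod_iff hm]

def laverOp (N : ℕ) [NeZero N] (x y : Fin N) : Fin N := laver N (rep x) (rep y)

theorem rep_laverOp (x y : Fin N) : rep (laverOp N x y) = laver N (rep x) (rep y) :=
  rep_natCast (laver_mem_Icc (rep_mem_Icc y))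

theorem laverOp_one (x : Fin N) : laverOp N x 1 = x + 1 := by
  have hone : rep (1 : Fin N) = 1 := by
    simpa using rep_natCast (N := N) ⟨le_rfl, NeZero.one_le⟩
  rw [laverOp, hone]
  rcases (rep_mem_Icc x).2.lt_or_eq with hx | hx
  · rw [laver_one hx, Nat.cast_succ, cast_rep]
  · rw [hx, laver_of_le le_rfl, ← cast_rep x, hx, Fin.natCast_self, zero_add, Nat.cast_one]

theorem laverOp_ldist (hN : ∀ a, laver N a N = N) (x y z : Fin N) :
    laverOp N x (laverOp N y z) = laverOp N (laverOp N x y) (laverOp N x z) := by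
  have hy := rep_mem_Icc y
  rw [laverOp.eq_1 N x (laverOp N y z), laverOp.eq_1 N (laverOp N x y), rep_laverOp,
    rep_laverOp, rep_laverOp, laver_ldist hN hy.1 hy.2 (rep_mem_Icc z).1]

section LeftDistributive

variable {op : Fin N → Fin N → Fin N} (hLD : ∀ x y z, op x (op y z) = op (op x y) (op x z))
  (hone : ∀ x, op x 1 = x + 1)
include hLD hone

theorem op_add_one (x y : Fin N) : op x (y + 1) = op (op x y) (x + 1) := by
  rw [← hone y, ← hone x, hLD]

theorem op_zero_left (z : Fin N) : op 0 z = z := by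
  have hcast : ∀ k : ℕ, op 0 ((k + 1 : ℕ) : Fin N) = (k + 1 : ℕ) := by
    intro k
    induction k with
    | zero => simpa using hone 0
    | succ k ih => rw [Nat.cast_succ, op_add_one hLD hone, ih, zero_add, hone]
  obtain ⟨k, hk⟩ : ∃ k, rep z = k + 1 := ⟨rep z - 1, by have := (rep_mem_Icc z).1; omega⟩
  simpa only [← hk, cast_rep] using hcast k

theorem op_natCast_eq_natCast_laver {M : ℕ} (hM : N ∣ M) {a b : ℕ} (ha : a ≤ M) (hb : 1 ≤ b) :
    op a b = (laver M a b : ℕ) := by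
  rcases ha.eq_or_lt with rfl | ha
  · rw [Fin.natCast_eq_zero.2 hM, op_zero_left hLD hone, laver_of_le le_rfl]
  induction b, hb using Nat.le_induction with
  | base => rw [Nat.cast_one, hone, laver_one ha, Nat.cast_succ]
  | succ b hb ih =>
    obtain ⟨hab, habM⟩ := laver_mem_Ioc ha hb
    rw [Nat.cast_succ, op_add_one hLD hone, ih, ← Nat.cast_succ,
      op_natCast_eq_natCast_laver hM habM (Nat.le_add_left 1 a), laver_succ ha hb]
termination_by M - a

theorem eq_laverOp : op = laverOp N := by
  funext x y
  rw [laverOp, ← op_natCast_eq_natCast_laver hLD hone dvd_rfl (rep_mem_Icc x).2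
    (rep_mem_Icc y).1, cast_rep, cast_rep]

end LeftDistributive

theorem exists_dvd_laverOp_eq_zero_iff (hN : ∀ a, laver N a N = N) (x : Fin N) :
    ∃ m, m ∣ N ∧ ∀ y, laverOp N x y = 0 ↔ m ∣ rep y := by
  have hzero : ∀ y, laverOp N x y = 0 ↔ laver N (rep x) (rep y) = N :=
    fun y => natCast_eq_zero_iff_eq (laver_mem_Icc (rep_mem_Icc y))
  rcases (rep_mem_Icc x).2.lt_or_eq with hx | hx
  · refine ⟨period N (rep x), (laver_eq_top_iff hx NeZero.one_le).1 (hN _), fun y => ?_⟩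
    rw [hzero, laver_eq_top_iff hx (rep_mem_Icc y).1]
  · refine ⟨N, dvd_rfl, fun y => ?_⟩
    rw [hzero, hx, laver_of_le le_rfl, ← natCast_eq_zero_iff_eq (rep_mem_Icc y), cast_rep,
      ← Fin.natCast_eq_zero, cast_rep]

theorem laver_two_mul_self (hN : ∀ a, laver N a N = N) (a : ℕ) :
    laver (2 * N) a (2 * N) = 2 * N := by
  rcases le_or_gt (2 * N) a with ha | ha
  · exact laver_of_le ha _
  obtain ⟨m, hmN, hm⟩ := exists_dvd_laverOp_eq_zero_iff hN (a : Fin N)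
  have hdvd : ∀ b, 1 ≤ b → (N ∣ laver (2 * N) a b ↔ m ∣ b) := fun b hb => by
    rw [← Fin.natCast_eq_zero, ← op_natCast_eq_natCast_laver (laverOp_ldist hN) laverOp_one
      (dvd_mul_left N 2) ha.le hb, hm, dvd_rep_natCast_iff hmN]
  rw [laver_eq_top_iff ha (by omega)]
  exact (period_dvd_two_mul ha hdvd).trans (mul_dvd_mul_left 2 hmN)

end Cyclic

theorem laver_two_pow_self (n a : ℕ) : laver (2 ^ n) a (2 ^ n) = 2 ^ n := by
  induction n generalizing a with
  | zero =>
    rcases Nat.eq_zero_or_pos a with rfl | ha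
    · exact laver_one one_pos
    · exact laver_of_le ha _
  | succ n ih => rw [pow_succ']; exact laver_two_mul_self ih a

end LaverTable

open LaverTable in
/-- For every natural number `n` there exists exactly one binary
operation `*` on `Fin (2^n)` that is left self-distributive and satisfies
`a * 1 = a + 1 (mod 2^n)` for all `a`. -/
theorem unique_cyclic_LD (n : ℕ) :
    ∃! op : Fin (2^n) → Fin (2^n) → Fin (2^n),
      (∀ a b c, op a (op b c) = op (op a b) (op a c)) ∧
      (∀ a, op a 1 = a + 1) :=
  ⟨laverOp (2 ^ n), ⟨laverOp_ldist (laver_two_pow_self n), laverOp_one⟩,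
    fun _ ⟨hLD, hone⟩ => eq_laverOp hLD hone⟩
end

section
/- Let n be a natural number and let * be a left self-distributive binary operation on Fin (2^n) with a*1 = a+1 (mod 2^n) for all a. Then for every a there exists k with 0 ≤ k ≤ n such that, writing p = 2^k: (i) a < a*1 < a*2 < ⋯ < a*(p−1) (these inequalities are vacuous when p = 1); (ii) a*(p mod 2^n) = 0; and (iii) a*((p + b) mod 2^n) = a*b for every b. In other words, each row of A_n strictly increases up to the value at p−1, hits 0 at p, and is periodic with period p, a power of 2. -/
/-!
Let `0` play the role of the top element `N` of the usual presentation `{1, …, N}` of the table.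
Self-distributivity gives `a * (b + 1) = (a * b) * (a + 1)` and makes `0` a left unit, and a
descending induction on `a` then shows that every entry of row `a` is `0` or larger than `a`.
Hence the row climbs strictly until it first reaches `0`, at some `p`, and from there on repeats
with period `p`. Moreover `a * 0 = 0`: otherwise `c = a * 0` satisfies `a < c`, and
`a * (0 * 1) = c * (a * 1)` says that `c` fixes `a + 1`, forcing `c < a + 1`.
So `p` divides `N = 2 ^ n`, i.e. `p` is a power of `2`.
-/

/-- The unique left self-distributive operation on `Fin (2^m)` with `a * 1 = a + 1`. -/
def IsCyclicLD (m : ℕ) (op : Fin (2^m) → Fin (2^m) → Fin (2^m)) : Prop :=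
  (∀ a b c, op a (op b c) = op (op a b) (op a c)) ∧ ∀ a, op a 1 = a + 1

open Fin.NatCast

namespace Fin

variable {N : ℕ} [NeZero N]

theorem add_one_induction {motive : Fin N → Prop} (one : motive 1)
    (succ : ∀ b, motive b → motive (b + 1)) (b : Fin N) : motive b := by
  have h : ∀ m : ℕ, motive ((m : Fin N) + 1) := by
    intro m
    induction m with
    | zero => simpa using one
    | succ m ih => simpa using succ _ ih
  simpa using h (b - 1).val

theorem eq_zero_or_lt_add_one (x : Fin N) : x + 1 = 0 ∨ x < x + 1 := by
  obtain ⟨M, rfl⟩ := Nat.exists_eq_succ_of_ne_zero (NeZero.ne N)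
  by_cases hx : x = last M
  · exact Or.inl (hx ▸ last_add_one M)
  · exact Or.inr (lt_add_one_iff.2 (lt_last_iff_ne_last.2 hx))

theorem add_one_ne_zero_of_lt {x y : Fin N} (h : x < y) : x + 1 ≠ 0 := by
  obtain ⟨M, rfl⟩ := Nat.exists_eq_succ_of_ne_zero (NeZero.ne N)
  exact (add_one_pos x (h.trans_le (le_last y))).ne'

theorem add_one_le_of_lt' {x y : Fin N} (h : x < y) : x + 1 ≤ y := by
  obtain ⟨M, rfl⟩ := Nat.exists_eq_succ_of_ne_zero (NeZero.ne N)
  exact add_one_le_of_lt h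

end Fin

def IsCyclicLDOn (N : ℕ) [NeZero N] (op : Fin N → Fin N → Fin N) : Prop :=
  (∀ a b c, op a (op b c) = op (op a b) (op a c)) ∧ ∀ a, op a 1 = a + 1

namespace IsCyclicLDOn

variable {N : ℕ} [NeZero N] {op : Fin N → Fin N → Fin N}

theorem op_add_one (hop : IsCyclicLDOn N op) (a b : Fin N) :
    op a (b + 1) = op (op a b) (a + 1) := by
  rw [← hop.2 b, hop.1, hop.2]

theorem zero_op (hop : IsCyclicLDOn N op) (b : Fin N) : op 0 b = b := by
  induction b using Fin.add_one_induction with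
  | one => rw [hop.2, zero_add]
  | succ b hb => rw [hop.op_add_one, hb, zero_add, hop.2]

theorem op_eq_zero_or_lt (hop : IsCyclicLDOn N op) (a b : Fin N) : op a b = 0 ∨ a < op a b := by
  induction a using WellFoundedGT.induction generalizing b with | ind a ih => ?_
  induction b using Fin.add_one_induction with
  | one => rw [hop.2]; exact Fin.eq_zero_or_lt_add_one a
  | succ b hb =>
    rw [hop.op_add_one]
    rcases hb with hb | hb
    · rw [hb, hop.zero_op]
      exact Fin.eq_zero_or_lt_add_one a
    · exact (ih _ hb (a + 1)).imp_right hb.trans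

theorem op_zero (hop : IsCyclicLDOn N op) (a : Fin N) : op a 0 = 0 := by
  by_contra hc
  have hac : a < op a 0 := (hop.op_eq_zero_or_lt a 0).resolve_left hc
  have hfix : op (op a 0) (a + 1) = a + 1 := by
    simpa only [hop.zero_op, hop.2] using (hop.1 a 0 1).symm
  rcases hop.op_eq_zero_or_lt (op a 0) (a + 1) with h | h <;> rw [hfix] at h
  · exact Fin.add_one_ne_zero_of_lt hac h
  · exact (Fin.add_one_le_of_lt' hac).not_gt h

theorem op_lt_op_add_one (hop : IsCyclicLDOn N op) {a b : Fin N} (h : op a (b + 1) ≠ 0) :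
    op a b < op a (b + 1) := by
  rw [hop.op_add_one] at h ⊢
  exact (hop.op_eq_zero_or_lt _ _).resolve_left h

theorem periodic_row_of_op_eq_zero (hop : IsCyclicLDOn N op) {a : Fin N} {p : ℕ}
    (hp : op a p = 0) : Function.Periodic (fun m : ℕ => op a m) p := by
  intro b
  induction b with
  | zero => simp only [zero_add, hp, Nat.cast_zero, hop.op_zero]
  | succ b ih =>
    dsimp only at ih ⊢
    rw [Nat.add_right_comm, Nat.cast_succ, Nat.cast_succ, hop.op_add_one, ih, ← hop.op_add_one]

theorem exists_row_period (hop : IsCyclicLDOn N op) (a : Fin N) :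
    ∃ p : ℕ, 0 < p ∧ p ∣ N ∧ op a p = 0 ∧ ∀ m, 0 < m → m < p → op a m ≠ 0 := by
  classical
  have hN : ∃ p : ℕ, 0 < p ∧ op a p = 0 := ⟨N, NeZero.pos N, by rw [Fin.natCast_self, hop.op_zero]⟩
  obtain ⟨hp0, hpz⟩ := Nat.find_spec hN
  refine ⟨Nat.find hN, hp0, Nat.dvd_of_mod_eq_zero ?_, hpz,
    fun m hm hmp hmz => Nat.find_min hN hmp ⟨hm, hmz⟩⟩
  by_contra hne
  have hmod : op a (N % Nat.find hN : ℕ) = 0 := by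
    rw [(hop.periodic_row_of_op_eq_zero hpz).map_mod_nat, Fin.natCast_self, hop.op_zero]
  exact Nat.find_min hN (Nat.mod_lt N hp0) ⟨Nat.pos_of_ne_zero hne, hmod⟩

end IsCyclicLDOn

/-- in `A_n`, every row strictly increases up to its value at `p - 1`
(where `p = 2^k` for some `k ≤ n`), hits `0` at `p`, and is periodic with period `p`. -/
theorem row_structure (n : ℕ) (op : Fin (2^n) → Fin (2^n) → Fin (2^n))
    (hop : IsCyclicLD n op) (a : Fin (2^n)) :
    ∃ k ≤ n,
      -- (i)  a < a*1 < a*2 < ⋯ < a*(2^k − 1)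
      ((1 < 2^k → a < op a 1) ∧
        (∀ i : ℕ, 1 ≤ i → i + 1 < 2^k →
          op a ((i : ℕ) : Fin (2^n)) < op a ((i + 1 : ℕ) : Fin (2^n)))) ∧
      -- (ii)  a*(2^k mod 2^n) = 0
      op a ((2^k : ℕ) : Fin (2^n)) = 0 ∧
      -- (iii) a*((2^k + b) mod 2^n) = a*b for every b
      (∀ b : ℕ, op a ((2^k + b : ℕ) : Fin (2^n)) = op a ((b : ℕ) : Fin (2^n))) := by
  have hop : IsCyclicLDOn (2^n) op := hop
  obtain ⟨p, hp0, hpN, hpz, hmin⟩ := hop.exists_row_period a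
  obtain ⟨k, hk, rfl⟩ := (Nat.dvd_prime_pow Nat.prime_two).1 hpN
  refine ⟨k, hk, ⟨fun h1 => ?_, fun i _ hi => ?_⟩, hpz, fun b => ?_⟩
  · exact (hop.op_eq_zero_or_lt a 1).resolve_left (by simpa using hmin 1 one_pos h1)
  · have hi0 := hmin (i + 1) i.succ_pos hi
    rw [Nat.cast_succ] at hi0 ⊢
    exact hop.op_lt_op_add_one hi0
  · rw [add_comm]
    exact hop.periodic_row_of_op_eq_zero hpz b
end

section
/- In the cyclic left-distributive algebra A_n (n ≥ 1): p_n(0) = 2^n, p_n(2^n − 1) = 1, p_n(2^{n−1}) = 2^{n−1}, and for every a with 0 < a < 2^n − 1 one has 1 < p_n(a) < 2^n. -/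
/-!
Write `a * k` for `a * (k mod N)`. From `a * (b + 1) = (a * b) * (a + 1)` one shows, by downward
induction on `a`, that every row climbs strictly, `a < a * 1 < a * 2 < ⋯`, until it hits `0`;
so row `a` reaches `0` within `N - a` steps. Left distributivity then gives `a * 0 = 0`, and with
it row `a` is periodic, its zeros being exactly the multiples of its period, which therefore
divides `N`. Row `0` is the identity, so its period is `N`, and `a * 1 = a + 1` vanishes only
for `a = N - 1`. For `N = 2^(m+1)` and `a = 2^m`, each `c = 2^m + t` with `t ≥ 1` has a period
dividing `2^(m+1)` and below `2^m`, hence dividing `2^m`; so `c * (2^m + 1) = c + 1`, which gives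
`2^m * k = 2^m + k` for `1 ≤ k ≤ 2^m` and the period `2^m`.
-/

open Fin.NatCast

/-- The period `p_m(a)`: the least positive `p` with `a * (p mod 2^m) = 0`. -/
noncomputable def period (m : ℕ) (op : Fin (2^m) → Fin (2^m) → Fin (2^m))
    (a : Fin (2^m)) : ℕ :=
  sInf {p : ℕ | 0 < p ∧ op a ((p : ℕ) : Fin (2^m)) = 0}

theorem Fin.add_one_eq_zero_or_lt {N : ℕ} [NeZero N] (a : Fin N) : a + 1 = 0 ∨ a < a + 1 := by
  by_cases h : a.val + 1 < N
  · right
    rw [Fin.lt_def, Fin.val_add_one_of_lt' h]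
    omega
  · left
    rw [← Fin.cast_val_eq_self a, ← Nat.cast_add_one, Fin.natCast_eq_zero]
    have := a.isLt
    rw [show a.val + 1 = N by omega]

variable {N : ℕ} [NeZero N]

structure IsCyclicLDOp (op : Fin N → Fin N → Fin N) : Prop where
  self_distrib : ∀ a b c, op a (op b c) = op (op a b) (op a c)
  op_one : ∀ a, op a 1 = a + 1

noncomputable def rowPeriod (op : Fin N → Fin N → Fin N) (a : Fin N) : ℕ :=
  sInf {p : ℕ | 0 < p ∧ op a (p : Fin N) = 0}

theorem rowPeriod_le_of_op_eq_zero {op : Fin N → Fin N → Fin N} {a : Fin N} {k : ℕ}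
    (hk : 0 < k) (hz : op a k = 0) : rowPeriod op a ≤ k :=
  Nat.sInf_le ⟨hk, hz⟩

namespace IsCyclicLDOp

variable {op : Fin N → Fin N → Fin N}

theorem op_add_one (h : IsCyclicLDOp op) (a b : Fin N) : op a (b + 1) = op (op a b) (a + 1) := by
  rw [← h.op_one b, h.self_distrib, h.op_one]

theorem zero_op (h : IsCyclicLDOp op) (b : Fin N) : op 0 b = b := by
  have hsucc (b : Fin N) : op 0 (b + 1) = op 0 b + 1 := by
    rw [h.op_add_one, zero_add, h.op_one]
  have hzero : op 0 0 = 0 :=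
    add_right_cancel (b := 1) (by rw [← hsucc, zero_add, h.op_one, zero_add])
  rw [← Fin.cast_val_eq_self b]
  induction b.val with
  | zero => exact hzero
  | succ k ih => rw [Nat.cast_add_one, hsucc, ih]

theorem eq_zero_or_lt_op (h : IsCyclicLDOp op) (a : Fin N) {k : ℕ} (hk : 0 < k) :
    op a k = 0 ∨ a < op a k := by
  induction a using WellFoundedGT.induction generalizing k with
  | _ a ih =>
  induction k, hk using Nat.le_induction with
  | base => rw [Nat.cast_one, h.op_one]; exact a.add_one_eq_zero_or_lt
  | succ k hk ihk =>
    rw [Nat.cast_add_one, h.op_add_one]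
    rcases ihk with hzero | hlt
    · rw [hzero, h.zero_op]
      exact a.add_one_eq_zero_or_lt
    · have := ih _ hlt (k := a.val + 1) (by omega)
      rw [Nat.cast_add_one, Fin.cast_val_eq_self] at this
      exact this.imp_right hlt.trans

theorem op_add_one_eq_zero_or_lt (h : IsCyclicLDOp op) (a b : Fin N) :
    op a (b + 1) = 0 ∨ op a b < op a (b + 1) := by
  have := h.eq_zero_or_lt_op (op a b) (k := a.val + 1) (by omega)
  rwa [Nat.cast_add_one, Fin.cast_val_eq_self, ← h.op_add_one] at this

theorem exists_op_eq_zero (h : IsCyclicLDOp op) (a : Fin N) :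
    ∃ k, 0 < k ∧ k ≤ N - a.val ∧ op a k = 0 := by
  by_contra! hne
  have climb : ∀ k, 0 < k → k ≤ N - a.val → a.val + k ≤ (op a k).val := by
    intro k hk
    induction k, hk using Nat.le_induction with
    | base =>
      intro hle
      rw [Nat.cast_one, h.op_one]
      rcases a.add_one_eq_zero_or_lt with hzero | hlt
      · exact absurd (by rwa [Nat.cast_one, h.op_one]) (hne 1 one_pos hle)
      · exact hlt
    | succ k hk ih =>
      intro hle
      have hstep := h.op_add_one_eq_zero_or_lt a k
      rw [← Nat.cast_add_one] at hstep
      rcases hstep with hzero | hlt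
      · exact absurd hzero (hne _ (by omega) hle)
      · have := ih (by omega)
        rw [Fin.lt_def] at hlt
        omega
  have := climb (N - a.val) (by have := a.isLt; omega) le_rfl
  have := (op a ↑(N - a.val)).isLt
  omega

theorem op_zero (h : IsCyclicLDOp op) (a : Fin N) : op a 0 = 0 := by
  induction a using WellFoundedGT.induction with
  | _ a ih =>
  obtain ⟨k, -, -, hk⟩ := h.exists_op_eq_zero a
  -- `a * 0 = a * (a * k) = (a * a) * (a * k) = (a * a) * 0`
  have hshift : op a 0 = op (op a a) 0 := by
    conv_lhs => rw [← hk, h.self_distrib, hk]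
  by_cases ha : a = 0
  · exact ha ▸ h.zero_op 0
  have := h.eq_zero_or_lt_op a (k := a.val) (Fin.pos_iff_ne_zero.mpr ha)
  rw [Fin.cast_val_eq_self] at this
  rcases this with hzero | hlt
  · rw [hshift, hzero, h.zero_op]
  · rw [hshift]
    exact ih _ hlt

theorem op_natCast_add_of_op_eq_zero (h : IsCyclicLDOp op) {a : Fin N} {p : ℕ}
    (hp : op a p = 0) (j : ℕ) : op a ↑(j + p) = op a j := by
  induction j with
  | zero => rw [zero_add, hp, Nat.cast_zero, h.op_zero]
  | succ j ih =>
    rw [add_right_comm, Nat.cast_add_one, h.op_add_one, ih, ← h.op_add_one, Nat.cast_add_one]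

theorem op_natCast_mod_of_op_eq_zero (h : IsCyclicLDOp op) {a : Fin N} {p : ℕ}
    (hp : op a p = 0) (j : ℕ) : op a ↑(j % p) = op a j := by
  have hmul (m : ℕ) : op a ↑(j % p + p * m) = op a ↑(j % p) := by
    induction m with
    | zero => rw [mul_zero, add_zero]
    | succ m ih => rw [mul_add_one, ← add_assoc, h.op_natCast_add_of_op_eq_zero hp, ih]
  rw [← hmul (j / p), Nat.mod_add_div]

theorem rowPeriod_mem (h : IsCyclicLDOp op) (a : Fin N) :
    rowPeriod op a ∈ {p : ℕ | 0 < p ∧ op a (p : Fin N) = 0} := by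
  obtain ⟨k, hk, -, hz⟩ := h.exists_op_eq_zero a
  exact Nat.sInf_mem ⟨k, hk, hz⟩

theorem rowPeriod_pos (h : IsCyclicLDOp op) (a : Fin N) : 0 < rowPeriod op a :=
  (h.rowPeriod_mem a).1

theorem op_rowPeriod (h : IsCyclicLDOp op) (a : Fin N) : op a (rowPeriod op a) = 0 :=
  (h.rowPeriod_mem a).2

theorem rowPeriod_le_sub (h : IsCyclicLDOp op) (a : Fin N) : rowPeriod op a ≤ N - a.val := by
  obtain ⟨k, hk, hle, hz⟩ := h.exists_op_eq_zero a
  exact (rowPeriod_le_of_op_eq_zero hk hz).trans hle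

theorem op_natCast_eq_of_modEq (h : IsCyclicLDOp op) {a : Fin N} {j k : ℕ}
    (hjk : j ≡ k [MOD rowPeriod op a]) : op a j = op a k := by
  rw [← h.op_natCast_mod_of_op_eq_zero (h.op_rowPeriod a), hjk,
    h.op_natCast_mod_of_op_eq_zero (h.op_rowPeriod a)]

theorem op_natCast_eq_zero_iff (h : IsCyclicLDOp op) {a : Fin N} {k : ℕ} :
    op a k = 0 ↔ rowPeriod op a ∣ k := by
  refine ⟨fun hk => ?_, fun hdvd => ?_⟩
  · rw [← h.op_natCast_mod_of_op_eq_zero (h.op_rowPeriod a)] at hk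
    refine Nat.dvd_of_mod_eq_zero (Nat.eq_zero_of_not_pos fun hpos => ?_)
    exact (Nat.mod_lt k (h.rowPeriod_pos a)).not_ge (rowPeriod_le_of_op_eq_zero hpos hk)
  · rw [h.op_natCast_eq_of_modEq (Nat.modEq_zero_iff_dvd.mpr hdvd), Nat.cast_zero, h.op_zero]

theorem rowPeriod_dvd (h : IsCyclicLDOp op) (a : Fin N) : rowPeriod op a ∣ N :=
  h.op_natCast_eq_zero_iff.mp (by rw [Fin.natCast_self, h.op_zero])

theorem rowPeriod_eq_one_iff (h : IsCyclicLDOp op) {a : Fin N} :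
    rowPeriod op a = 1 ↔ a + 1 = 0 := by
  rw [← Nat.dvd_one, ← h.op_natCast_eq_zero_iff, Nat.cast_one, h.op_one]

theorem rowPeriod_zero (h : IsCyclicLDOp op) : rowPeriod op 0 = N := by
  refine Nat.dvd_antisymm (h.rowPeriod_dvd 0) ?_
  have := h.op_rowPeriod 0
  rwa [h.zero_op, Fin.natCast_eq_zero] at this

end IsCyclicLDOp

section TwoPow

variable {m : ℕ} {op : Fin (2 ^ (m + 1)) → Fin (2 ^ (m + 1)) → Fin (2 ^ (m + 1))}

theorem IsCyclicLDOp.op_two_pow_natCast (h : IsCyclicLDOp op) {k : ℕ} (hk0 : 0 < k)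
    (hk : k ≤ 2 ^ m) :
    op ((2 ^ m : ℕ) : Fin (2 ^ (m + 1))) k = ((2 ^ m + k : ℕ) : Fin (2 ^ (m + 1))) := by
  induction k, hk0 using Nat.le_induction with
  | base => rw [Nat.cast_one, h.op_one, Nat.cast_add_one]
  | succ t ht ih =>
    set c : Fin (2 ^ (m + 1)) := ((2 ^ m + t : ℕ) : Fin (2 ^ (m + 1)))
    have hc : c.val = 2 ^ m + t := Nat.mod_eq_of_lt (by rw [pow_succ]; omega)
    have hlt : rowPeriod op c < 2 ^ m := by
      have := h.rowPeriod_le_sub c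
      have := pow_succ 2 m
      omega
    -- the period divides `2 ^ (m + 1)`, so being below `2 ^ m` it divides `2 ^ m`
    have hdvd : rowPeriod op c ∣ 2 ^ m := by
      obtain ⟨i, -, heq⟩ := (Nat.dvd_prime_pow Nat.prime_two).mp (h.rowPeriod_dvd c)
      rw [heq] at hlt ⊢
      exact pow_dvd_pow 2 ((Nat.pow_lt_pow_iff_right (by norm_num)).mp hlt).le
    have hmod : 2 ^ m + 1 ≡ 0 + 1 [MOD rowPeriod op c] :=
      (Nat.modEq_zero_iff_dvd.mpr hdvd).add_right 1
    rw [Nat.cast_add_one, h.op_add_one, ih (by omega), ← Nat.cast_add_one,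
      h.op_natCast_eq_of_modEq hmod, zero_add, Nat.cast_one, h.op_one, ← Nat.cast_add_one,
      add_assoc]

theorem IsCyclicLDOp.rowPeriod_two_pow (h : IsCyclicLDOp op) :
    rowPeriod op ((2 ^ m : ℕ) : Fin (2 ^ (m + 1))) = 2 ^ m := by
  have hval : ((2 ^ m : ℕ) : Fin (2 ^ (m + 1))).val = 2 ^ m :=
    Nat.mod_eq_of_lt (Nat.pow_lt_pow_succ (by norm_num))
  have hpos := h.rowPeriod_pos ((2 ^ m : ℕ) : Fin (2 ^ (m + 1)))
  have hle : rowPeriod op ((2 ^ m : ℕ) : Fin (2 ^ (m + 1))) ≤ 2 ^ m := by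
    have := h.rowPeriod_le_sub ((2 ^ m : ℕ) : Fin (2 ^ (m + 1)))
    have := pow_succ 2 m
    omega
  refine le_antisymm hle (not_lt.mp fun hlt => ?_)
  have hzero := h.op_rowPeriod ((2 ^ m : ℕ) : Fin (2 ^ (m + 1)))
  rw [h.op_two_pow_natCast hpos hle, Fin.natCast_eq_zero] at hzero
  exact Nat.not_dvd_of_pos_of_lt (by omega) (by have := pow_succ 2 m; omega) hzero

end TwoPow

theorem period_eq_rowPeriod (m : ℕ) (op : Fin (2 ^ m) → Fin (2 ^ m) → Fin (2 ^ m))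
    (a : Fin (2 ^ m)) : period m op a = rowPeriod op a :=
  rfl

theorem period_values_general (n : ℕ) (op : Fin (2^n) → Fin (2^n) → Fin (2^n))
    (hop : IsCyclicLD n op) :
    period n op 0 = 2^n ∧
    period n op ((2^n - 1 : ℕ) : Fin (2^n)) = 1 ∧
    period n op ((2^(n-1) : ℕ) : Fin (2^n)) = 2^(n-1) ∧
    ∀ a : Fin (2^n), 0 < a.val → a.val < 2^n - 1 →
      1 < period n op a ∧ period n op a < 2^n := by
  have h : IsCyclicLDOp op := ⟨hop.1, hop.2⟩
  simp only [period_eq_rowPeriod]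
  refine ⟨h.rowPeriod_zero, h.rowPeriod_eq_one_iff.mpr ?_, ?_, fun a ha0 ha => ⟨?_, ?_⟩⟩
  · rw [← Nat.cast_add_one, Nat.sub_add_cancel Nat.one_le_two_pow, Fin.natCast_self]
  · cases n with
    | zero =>
      have hzero : ((2 ^ (0 - 1) : ℕ) : Fin (2 ^ 0)) = 0 :=
        Fin.ext (Nat.lt_one_iff.mp (Fin.isLt _))
      exact hzero ▸ h.rowPeriod_zero
    | succ m => exact h.rowPeriod_two_pow
  · have hne : a + 1 ≠ 0 := by
      rw [Ne, Fin.ext_iff, Fin.val_add_one_of_lt' (by omega)]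
      exact Nat.succ_ne_zero _
    have := h.rowPeriod_pos a
    have := mt h.rowPeriod_eq_one_iff.mp hne
    omega
  · have := h.rowPeriod_le_sub a
    omega

/-- `p_n(0) = 2^n`, `p_n(2^n − 1) = 1`, `p_n(2^{n−1}) = 2^{n−1}`, and
`1 < p_n(a) < 2^n` whenever `0 < a < 2^n − 1`. -/
theorem period_values (n : ℕ) (hn : 1 ≤ n) (op : Fin (2^n) → Fin (2^n) → Fin (2^n))
    (hop : IsCyclicLD n op) :
    period n op 0 = 2^n ∧
    period n op ((2^n - 1 : ℕ) : Fin (2^n)) = 1 ∧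
    period n op ((2^(n-1) : ℕ) : Fin (2^n)) = 2^(n-1) ∧
    ∀ a : Fin (2^n), 0 < a.val → a.val < 2^n - 1 →
      1 < period n op a ∧ period n op a < 2^n :=
  period_values_general n op hop
end

section
/- Reduction modulo 2^n is a homomorphism from A_{n+1} onto A_n: for all a, b ∈ {0,1,…,2^{n+1}−1}, (a *_{n+1} b) mod 2^n = (a mod 2^n) *_n (b mod 2^n), where *_m denotes the operation of A_m. -/
open Fin.NatCast

namespace Fin

variable {N : ℕ} [NeZero N]

theorem induction_add_one {P : Fin N → Prop} (one : P 1) (add_one : ∀ b, P b → P (b + 1))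
    (b : Fin N) : P b := by
  have hcast : ∀ k : ℕ, P ((k + 1 : ℕ) : Fin N) := by
    intro k
    induction k with
    | zero => simpa using one
    | succ k ih => simpa using add_one _ ih
  simpa using hcast (b - 1).val

theorem add_one_eq_zero_or_lt_s3 (c : Fin N) : c + 1 = 0 ∨ c < c + 1 := by
  rcases Nat.lt_or_ge (c.val + 1) N with hlt | hge
  · exact Or.inr (by simp [Fin.lt_def, Fin.val_add_one_of_lt' hlt])
  · left
    have hN : c.val + 1 = N := by lia
    ext
    rw [Fin.val_add, Fin.val_one', Nat.add_mod_mod, hN, Nat.mod_self, Fin.val_zero]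

theorem natCast_val_natCast {M : ℕ} [NeZero M] (h : M ∣ N) (k : ℕ) :
    (((k : Fin N).val : ℕ) : Fin M) = (k : Fin M) := by
  ext; simp [Nat.mod_mod_of_dvd k h]

theorem natCast_val_add_one {M : ℕ} [NeZero M] (h : M ∣ N) (c : Fin N) :
    (((c + 1).val : ℕ) : Fin M) = (c.val : Fin M) + 1 := by
  have hc : c + 1 = ((c.val + 1 : ℕ) : Fin N) := by simp
  rw [hc, natCast_val_natCast h]
  push_cast; rfl

end Fin

namespace CyclicLD

section

variable {N : ℕ} [NeZero N] {op : Fin N → Fin N → Fin N}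
  (self_distrib : ∀ a b c, op a (op b c) = op (op a b) (op a c)) (op_one : ∀ a, op a 1 = a + 1)
include self_distrib op_one

theorem op_add_one (a b : Fin N) : op a (b + 1) = op (op a b) (a + 1) := by
  rw [← op_one, self_distrib, op_one]

theorem zero_op (b : Fin N) : op 0 b = b := by
  induction b using Fin.induction_add_one with
  | one => simpa using op_one 0
  | add_one b hb => rw [op_add_one self_distrib op_one, hb, zero_add, op_one]

theorem op_eq_zero_or_lt {a : Fin N} (ha : a ≠ 0) (b : Fin N) : op a b = 0 ∨ a < op a b := by
  induction a using WellFoundedGT.induction generalizing b with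
  | _ a ih =>
  induction b using Fin.induction_add_one with
  | one => rw [op_one]; exact a.add_one_eq_zero_or_lt_s3
  | add_one b hb =>
    rw [op_add_one self_distrib op_one]
    rcases hb with hb | hb
    · rw [hb, zero_op self_distrib op_one]; exact a.add_one_eq_zero_or_lt_s3
    · exact (ih _ hb (ne_bot_of_gt hb) (a + 1)).imp_right hb.trans

end

theorem natCast_val_op {M N : ℕ} [NeZero M] [NeZero N] (hMN : M ∣ N)
    {op : Fin N → Fin N → Fin N} (self_distrib : ∀ a b c, op a (op b c) = op (op a b) (op a c))
    (op_one : ∀ a, op a 1 = a + 1)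
    {op' : Fin M → Fin M → Fin M}
    (self_distrib' : ∀ a b c, op' a (op' b c) = op' (op' a b) (op' a c))
    (op_one' : ∀ a, op' a 1 = a + 1) (a b : Fin N) :
    ((op a b).val : Fin M) = op' (a.val : Fin M) (b.val : Fin M) := by
  induction a using WellFoundedGT.induction generalizing b with
  | _ a ih =>
  rcases eq_or_ne a 0 with rfl | ha
  · simp [zero_op self_distrib op_one, zero_op self_distrib' op_one']
  have hsucc := Fin.natCast_val_add_one hMN
  induction b using Fin.induction_add_one with
  | one =>
    have hone : (((1 : Fin N).val : ℕ) : Fin M) = 1 := by simpa using hsucc 0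
    rw [op_one, hsucc, hone, op_one']
  | add_one b hb =>
    have hab : ((op (op a b) (a + 1)).val : Fin M) = op' ((op a b).val) ((a + 1).val) := by
      rcases op_eq_zero_or_lt self_distrib op_one ha b with h | h
      · simp [h, zero_op self_distrib op_one, zero_op self_distrib' op_one']
      · exact ih _ h _
    rw [op_add_one self_distrib op_one, hab, hb, hsucc a, hsucc b]
    exact (op_add_one self_distrib' op_one' _ _).symm

end CyclicLD

/-- reduction modulo `2^n` is a homomorphism from `A_{n+1}` onto `A_n`:
`(a *_{n+1} b) mod 2^n = (a mod 2^n) *_n (b mod 2^n)`. -/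
theorem mod_hom (n : ℕ)
    (op₁ : Fin (2^(n+1)) → Fin (2^(n+1)) → Fin (2^(n+1))) (hop₁ : IsCyclicLD (n+1) op₁)
    (op₀ : Fin (2^n) → Fin (2^n) → Fin (2^n)) (hop₀ : IsCyclicLD n op₀)
    (a b : Fin (2^(n+1))) :
    (op₁ a b).val % 2^n =
      (op₀ ((a.val % 2^n : ℕ) : Fin (2^n)) ((b.val % 2^n : ℕ) : Fin (2^n))).val := by
  have h := congrArg Fin.val
    (CyclicLD.natCast_val_op (pow_dvd_pow 2 n.le_succ) hop₁.1 hop₁.2 hop₀.1 hop₀.2 a b)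
  rw [← CharP.cast_eq_mod, ← CharP.cast_eq_mod]
  simpa using h
end

section
/- For every natural number n, in the cyclic left-distributive algebra A_{n+2} one has (2^n − 1) *_{n+2} 2 = 2^{n+1}. -/
theorem two_mul_dvd_two_pow_of_dvd_of_lt {d m : ℕ} (hd : d ∣ 2^(m+1)) (hlt : d < 2^m) :
    2 * d ∣ 2^m := by
  obtain ⟨i, -, rfl⟩ := (Nat.dvd_prime_pow Nat.prime_two).1 hd
  rw [← pow_succ']
  exact pow_dvd_pow 2 ((Nat.pow_lt_pow_iff_right one_lt_two).1 hlt)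

namespace Laver

/-- `A_k` on `{1, …, 2^k}`, with `2^k` standing for `0 : Fin (2^k)`. Rows `a ≥ 2^k` are the
identity; the branch `0` is never taken (`lt_table`). -/
def table (k a b : ℕ) : ℕ :=
  if ha : a < 2^k then
    if b ≤ 1 then a + b
    else if hu : a < table k a (b - 1) then table k (table k a (b - 1)) (a + 1) else 0
  else b
termination_by (2^k - a, b)
decreasing_by
  · exact Prod.Lex.right _ (by omega)
  · exact Prod.Lex.left _ _ (by omega)

variable {k a b : ℕ}

theorem table_of_le (h : 2^k ≤ a) : table k a b = b := by
  rw [table, dif_neg (not_lt.2 h)]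

theorem table_one (ha : a < 2^k) : table k a 1 = a + 1 := by
  rw [table, dif_pos ha, if_pos le_rfl]

theorem table_succ_of_lt (ha : a < 2^k) (hb : 1 ≤ b) (hu : a < table k a b) :
    table k a (b + 1) = table k (table k a b) (a + 1) := by
  rw [table, dif_pos ha, if_neg (by omega), Nat.add_sub_cancel, dif_pos hu]

theorem table_bounds (ha : a < 2^k) (hb : 1 ≤ b) : a < table k a b ∧ table k a b ≤ 2^k := by
  induction hd : 2^k - a using Nat.strong_induction_on generalizing a b with
  | _ d ih =>
  induction b, hb using Nat.le_induction with
  | base => rw [table_one ha]; omega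
  | succ b hb ihb =>
    rw [table_succ_of_lt ha hb ihb.1]
    rcases ihb.2.lt_or_eq with hu | hu
    · have := ih _ (by omega) hu (Nat.le_add_left 1 a) rfl
      omega
    · rw [hu, table_of_le le_rfl]; omega

theorem lt_table (ha : a < 2^k) (hb : 1 ≤ b) : a < table k a b := (table_bounds ha hb).1

theorem table_le (ha : a < 2^k) (hb : 1 ≤ b) : table k a b ≤ 2^k := (table_bounds ha hb).2

theorem table_succ (ha : a < 2^k) (hb : 1 ≤ b) :
    table k a (b + 1) = table k (table k a b) (a + 1) :=
  table_succ_of_lt ha hb (lt_table ha hb)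

theorem table_eq_iterate (ha : a < 2^k) (hb : 1 ≤ b) :
    table k a b = (fun x => table k x (a + 1))^[b] (2^k) := by
  induction b, hb using Nat.le_induction with
  | base => rw [Function.iterate_one, table_of_le le_rfl, table_one ha]
  | succ b hb ih => rw [Function.iterate_succ_apply', ← ih, table_succ ha hb]

noncomputable def period (k a : ℕ) : ℕ :=
  Function.minimalPeriod (fun x => table k x (a + 1)) (2^k)

theorem table_eq_two_pow_iff (ha : a < 2^k) (hb : 1 ≤ b) :
    table k a b = 2^k ↔ period k a ∣ b := by
  rw [table_eq_iterate ha hb]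
  exact Function.isPeriodicPt_iff_minimalPeriod_dvd

theorem table_lt_two_pow (ha : a < 2^k) (hb : 1 ≤ b) (hbp : b < period k a) :
    table k a b < 2^k :=
  (table_le ha hb).lt_of_ne fun h =>
    Nat.not_dvd_of_pos_of_lt hb hbp ((table_eq_two_pow_iff ha hb).1 h)

theorem add_le_table (ha : a < 2^k) (hb : 1 ≤ b) (hbp : b ≤ period k a) :
    a + b ≤ table k a b := by
  induction b, hb using Nat.le_induction with
  | base => rw [table_one ha]
  | succ b hb ih =>
    have hu := table_lt_two_pow ha hb (by omega)
    have := lt_table hu (Nat.le_add_left 1 a)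
    rw [table_succ ha hb]
    omega

theorem add_period_le (ha : a < 2^k) : a + period k a ≤ 2^k := by
  rcases Nat.eq_zero_or_pos (period k a) with hp | hp
  · omega
  · have := add_le_table ha hp le_rfl
    have := table_le ha hp
    omega

def proj (k x : ℕ) : ℕ := (x - 1) % 2^k + 1

theorem proj_pos (k x : ℕ) : 1 ≤ proj k x := Nat.le_add_left 1 _

theorem proj_le (k x : ℕ) : proj k x ≤ 2^k := Nat.mod_lt _ (Nat.two_pow_pos k)

theorem proj_of_le {x : ℕ} (h1 : 1 ≤ x) (h2 : x ≤ 2^k) : proj k x = x := by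
  rw [proj, Nat.mod_eq_of_lt (show x - 1 < 2^k by omega)]; omega

theorem proj_add_two_pow {x : ℕ} (hx : 1 ≤ x) : proj k (x + 2^k) = proj k x := by
  rw [proj, proj, Nat.sub_add_comm hx, Nat.add_mod_right]

theorem proj_of_two_pow_lt {x : ℕ} (h1 : 2^k < x) (h2 : x ≤ 2^(k+1)) : proj k x = x - 2^k := by
  have := proj_add_two_pow (k := k) (show 1 ≤ x - 2^k by omega)
  rw [Nat.sub_add_cancel h1.le] at this
  rw [this, proj_of_le (by omega) (by rw [Nat.two_pow_succ] at h2; omega)]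

theorem proj_succ {x : ℕ} (hx : 1 ≤ x) : proj k (x + 1) = proj k (proj k x + 1) := by
  obtain ⟨y, rfl⟩ : ∃ y, x = y + 1 := ⟨x - 1, by omega⟩
  simp only [proj, Nat.add_sub_cancel]
  rw [Nat.add_mod y, Nat.add_mod (y % 2^k) 1, Nat.mod_mod]

theorem proj_two_pow_add_one : proj k (2^k + 1) = 1 := by
  rw [add_comm, proj_add_two_pow le_rfl, proj_of_le le_rfl Nat.one_le_two_pow]

theorem table_one_eq_proj {y : ℕ} (h1 : 1 ≤ y) (h2 : y ≤ 2^k) :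
    table k y 1 = proj k (y + 1) := by
  rcases h2.lt_or_eq with h2 | rfl
  · rw [table_one h2, proj_of_le (by omega) h2]
  · rw [table_of_le le_rfl, proj_two_pow_add_one]

def TopAbsorbing (k : ℕ) : Prop := ∀ a, 1 ≤ a → a ≤ 2^k → table k a (2^k) = 2^k

theorem table_proj_succ (hk : TopAbsorbing k) (ha1 : 1 ≤ a) (ha2 : a ≤ 2^k) (hb1 : 1 ≤ b)
    (hb2 : b ≤ 2^k) : table k a (proj k (b + 1)) = table k (table k a b) (proj k (a + 1)) := by
  rcases ha2.lt_or_eq with ha2 | rfl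
  · rw [proj_of_le (x := a + 1) (by omega) ha2]
    rcases hb2.lt_or_eq with hb2 | rfl
    · rw [proj_of_le (by omega) hb2, table_succ ha2 hb1]
    · rw [proj_two_pow_add_one, hk a ha1 ha2.le, table_of_le le_rfl, table_one ha2]
  · rw [table_of_le le_rfl, table_of_le le_rfl, proj_two_pow_add_one, table_one_eq_proj hb1 hb2]

theorem proj_two_pow_succ : proj k (2^(k+1)) = 2^k := by
  rw [proj_of_two_pow_lt (Nat.pow_lt_pow_succ one_lt_two) le_rfl, Nat.two_pow_succ,
    Nat.add_sub_cancel]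

theorem proj_table_succ (hk : TopAbsorbing k) (ha1 : 1 ≤ a) (ha2 : a ≤ 2^(k+1)) (hb : 1 ≤ b) :
    proj k (table (k+1) a b) = table k (proj k a) (proj k b) := by
  induction hd : 2^(k+1) - a using Nat.strong_induction_on generalizing a b with
  | _ d ih =>
  rcases ha2.lt_or_eq with ha2 | rfl
  swap
  · rw [table_of_le le_rfl, proj_two_pow_succ, table_of_le le_rfl]
  induction b, hb using Nat.le_induction with
  | base =>
    rw [table_one ha2, proj_of_le le_rfl Nat.one_le_two_pow,
      table_one_eq_proj (proj_pos k a) (proj_le k a), ← proj_succ ha1]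
  | succ b hb ihb =>
    have hu := table_bounds ha2 hb
    rw [table_succ ha2 hb, ih _ (by omega) (by omega) hu.2 (by omega) rfl, ihb, proj_succ ha1,
      proj_succ hb, table_proj_succ hk (proj_pos k a) (proj_le k a) (proj_pos k b) (proj_le k b)]

theorem table_succ_of_two_pow_le (hk : TopAbsorbing k) (ha1 : 2^k ≤ a) (ha2 : a < 2^(k+1))
    (hb : 1 ≤ b) : table (k+1) a b = 2^k + table k (proj k a) (proj k b) := by
  have hv := table_bounds ha2 hb
  rw [← proj_table_succ hk (Nat.one_le_two_pow.trans ha1) ha2.le hb,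
    proj_of_two_pow_lt (by omega) hv.2]
  omega

theorem table_succ_two_pow_left (hk : TopAbsorbing k) (hb1 : 1 ≤ b) (hb2 : b ≤ 2^k) :
    table (k+1) (2^k) b = 2^k + b := by
  rw [table_succ_of_two_pow_le hk le_rfl (Nat.pow_lt_pow_succ one_lt_two) hb1,
    proj_of_le Nat.one_le_two_pow le_rfl, table_of_le le_rfl, proj_of_le hb1 hb2]

theorem table_succ_two_pow_right (hk : TopAbsorbing k) (ha1 : 2^k ≤ a) (ha2 : a < 2^(k+1)) :
    table (k+1) a (2^k) = 2^(k+1) := by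
  rw [table_succ_of_two_pow_le hk ha1 ha2 Nat.one_le_two_pow,
    proj_of_le Nat.one_le_two_pow le_rfl, hk _ (proj_pos k a) (proj_le k a), Nat.two_pow_succ]

theorem table_succ_period_add (hk : TopAbsorbing k) (ha : a < 2^k)
    (hmid : table (k+1) a (period k a) = 2^k) {r : ℕ} (hr1 : 1 ≤ r) (hr2 : r ≤ period k a) :
    table (k+1) a (period k a + r) = 2^k + table k a r := by
  have hk1 := Nat.two_pow_succ k
  have hpa := add_period_le ha
  have ha' : a < 2^(k+1) := by omega
  induction r, hr1 using Nat.le_induction with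
  | base =>
    rw [table_succ ha' (by omega), hmid, table_succ_two_pow_left hk (by omega) (by omega),
      table_one ha]
  | succ r hr ih =>
    have hs := lt_table ha hr
    have hs' := table_lt_two_pow ha hr (by omega)
    rw [← add_assoc, table_succ ha' (by omega), ih (by omega),
      table_succ_of_two_pow_le hk (by omega) (by omega) (by omega), add_comm (2^k) (table k a r),
      proj_add_two_pow (by omega), proj_of_le (by omega) hs'.le,
      proj_of_le (by omega) (by omega : a + 1 ≤ 2^k), ← table_succ ha hr]

theorem period_succ_dvd (hk : TopAbsorbing k) (ha1 : 1 ≤ a) (ha2 : a < 2^k) :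
    period (k+1) a ∣ 2 * period k a := by
  set p := period k a
  have hpk : p ∣ 2^k := (table_eq_two_pow_iff ha2 Nat.one_le_two_pow).1 (hk a ha1 ha2.le)
  have hp1 : 1 ≤ p := Nat.pos_of_dvd_of_pos hpk (Nat.two_pow_pos k)
  have hpa := add_period_le ha2
  have hk1 := Nat.two_pow_succ k
  have ha2' : a < 2^(k+1) := by omega
  have hv := table_bounds ha2' hp1
  have hproj : proj k (table (k+1) a p) = 2^k := by
    rw [proj_table_succ hk ha1 ha2'.le hp1, proj_of_le ha1 ha2.le, proj_of_le hp1 (by omega),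
      (table_eq_two_pow_iff ha2 hp1).2 dvd_rfl]
  rcases le_or_gt (table (k+1) a p) (2^k) with hle | hlt
  · have hmid : table (k+1) a p = 2^k := by rwa [proj_of_le (by omega) hle] at hproj
    have htop : table (k+1) a (p + p) = 2^(k+1) := by
      rw [table_succ_period_add hk ha2 hmid hp1 le_rfl, (table_eq_two_pow_iff ha2 hp1).2 dvd_rfl,
        Nat.two_pow_succ]
    rw [two_mul]
    exact (table_eq_two_pow_iff ha2' (by omega)).1 htop
  · have htop : table (k+1) a p = 2^(k+1) := by
      rw [proj_of_two_pow_lt hlt hv.2] at hproj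
      omega
    exact ((table_eq_two_pow_iff ha2' hp1).1 htop).trans (dvd_mul_left p 2)

theorem TopAbsorbing.succ (hk : TopAbsorbing k) : TopAbsorbing (k+1) := by
  intro a ha1 ha2
  rcases ha2.lt_or_eq with ha2 | rfl
  swap
  · exact table_of_le le_rfl
  refine (table_eq_two_pow_iff ha2 Nat.one_le_two_pow).2 ?_
  rcases lt_or_ge a (2^k) with hlt | hge
  · have hpk := (table_eq_two_pow_iff hlt Nat.one_le_two_pow).1 (hk a ha1 hlt.le)
    rw [pow_succ']
    exact (period_succ_dvd hk ha1 hlt).trans (mul_dvd_mul_left 2 hpk)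
  · have hdvd := (table_eq_two_pow_iff ha2 Nat.one_le_two_pow).1
      (table_succ_two_pow_right hk hge ha2)
    exact hdvd.trans (pow_dvd_pow 2 k.le_succ)

theorem topAbsorbing (k : ℕ) : TopAbsorbing k := by
  induction k with
  | zero => exact fun a ha1 _ => table_of_le ha1
  | succ k ih => exact ih.succ

theorem table_add_two_two_pow_right {j x : ℕ} (hx1 : 2^j < x) (hx2 : x < 2^(j+1)) :
    table (j+2) x (2^j) = 2^(j+2) := by
  have hk := topAbsorbing (j+1)
  have h1 := Nat.two_pow_succ j
  have h2 : 2^(j+2) = 2^(j+1) + 2^(j+1) := Nat.two_pow_succ (j+1)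
  have hp : period (j+1) x ∣ 2^(j+1) :=
    (table_eq_two_pow_iff hx2 Nat.one_le_two_pow).1 (hk x (by omega) hx2.le)
  have hlt : period (j+1) x < 2^j := by
    have := add_period_le hx2
    omega
  exact (table_eq_two_pow_iff (by omega) Nat.one_le_two_pow).2
    ((period_succ_dvd hk (by omega) hx2).trans (two_mul_dvd_two_pow_of_dvd_of_lt hp hlt))

theorem table_add_two_two_pow_left {n c : ℕ} (hc1 : 1 ≤ c) (hc2 : c ≤ 2^n) :
    table (n+2) (2^n) c = 2^n + c := by
  have h0 := Nat.one_le_two_pow (n := n)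
  have h1 := Nat.two_pow_succ n
  have h2 : 2^(n+2) = 2^(n+1) + 2^(n+1) := Nat.two_pow_succ (n+1)
  induction c, hc1 using Nat.le_induction with
  | base => exact table_one (by omega)
  | succ c hc ih =>
    rw [table_succ (by omega) hc, ih (by omega), table_succ (by omega) h0,
      table_add_two_two_pow_right (by omega) (by omega), table_of_le le_rfl, add_assoc]

theorem table_add_two_two_pow_two_pow (n : ℕ) : table (n+2) (2^n) (2^n) = 2^(n+1) := by
  rw [table_add_two_two_pow_left Nat.one_le_two_pow le_rfl, Nat.two_pow_succ]

end Laver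

open Fin.NatCast in
theorem IsCyclicLD.apply_natCast {m : ℕ} {op : Fin (2^m) → Fin (2^m) → Fin (2^m)}
    (hop : IsCyclicLD m op) {a b : ℕ} (ha1 : 1 ≤ a) (ha2 : a ≤ 2^m) (hb : 1 ≤ b) :
    op a b = (Laver.table m a b : ℕ) := by
  have hsucc (x : ℕ) : op x 1 = ((x + 1 : ℕ) : Fin (2^m)) := by rw [hop.2, Nat.cast_succ]
  induction hd : 2^m - a using Nat.strong_induction_on generalizing a b with
  | _ d ih =>
  rcases ha2.lt_or_eq with ha2 | rfl
  swap
  · rw [Laver.table_of_le le_rfl, Fin.natCast_self]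
    induction b, hb using Nat.le_induction with
    | base => rw [Nat.cast_one, hop.2, zero_add]
    | succ b hb ihb => rw [← hsucc, hop.1, ihb, hop.2 0, zero_add]
  induction b, hb using Nat.le_induction with
  | base => rw [Nat.cast_one, hsucc, Laver.table_one ha2]
  | succ b hb ihb =>
    have hu := Laver.table_bounds ha2 hb
    rw [← hsucc, hop.1, ihb, hsucc, ih _ (by omega) (by omega) hu.2 (by omega) rfl,
      Laver.table_succ ha2 hb]

open Fin.NatCast in
/-- in `A_{n+2}`, `(2^n − 1) *_{n+2} 2 = 2^{n+1}`. -/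
theorem pred_pow_mul_two (n : ℕ)
    (op : Fin (2^(n+2)) → Fin (2^(n+2)) → Fin (2^(n+2))) (hop : IsCyclicLD (n+2) op) :
    op ((2^n - 1 : ℕ) : Fin (2^(n+2))) ((2 : ℕ) : Fin (2^(n+2))) =
      ((2^(n+1) : ℕ) : Fin (2^(n+2))) := by
  have htwo : ((2 : ℕ) : Fin (2^(n+2))) = op 1 1 := by
    rw [hop.2, one_add_one_eq_two, Nat.cast_ofNat]
  have hpred : ((2^n - 1 : ℕ) : Fin (2^(n+2))) + 1 = ((2^n : ℕ) : Fin (2^(n+2))) := by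
    rw [← Nat.cast_add_one, Nat.sub_add_cancel Nat.one_le_two_pow]
  have hle : 2^n ≤ 2^(n+2) := Nat.pow_le_pow_right two_pos (Nat.le_add_right n 2)
  rw [htwo, hop.1, hop.2, hpred, hop.apply_natCast Nat.one_le_two_pow hle Nat.one_le_two_pow,
    Laver.table_add_two_two_pow_two_pow]
end
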